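/- arXiv:1612.04194 — 7 statements merged into one kernel-verified Lean document; each statement's English description precedes it below -/
import Mathlib

section
/- For the path P_n on n ≥ 2 vertices, the J-colouring number equals 2: there exists a proper 2-colouring of P_n in which every vertex's closed neighbourhood sees both colours, and no proper colouring with more than 2 colours has this property. -/
open SimpleGraph

/-- A colouring is proper. -/
def ProperColoring {V : Type*} {k : ℕ} (G : SimpleGraph V) (c : V → Fin k) : Prop :=
  ∀ u v, G.Adj u v → c u ≠ c v

/-- Vertex `v` belongs to a rainbow neighbourhood: its closed neighbourhood
contains every colour. -/
def RainbowAt {V : Type*} {k : ℕ} (G : SimpleGraph V) (c : V → Fin k) (v : V) : Prop :=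
  ∀ i : Fin k, ∃ u, (u = v ∨ G.Adj v u) ∧ c u = i

/-- A J-colouring: a proper colouring in which every vertex belongs to a
rainbow neighbourhood. -/
def IsJColoring {V : Type*} {k : ℕ} (G : SimpleGraph V) (c : V → Fin k) : Prop :=
  ProperColoring G c ∧ ∀ v, RainbowAt G c v

theorem J_number_path (n : ℕ) (hn : 2 ≤ n) :
    (∃ c : Fin n → Fin 2, IsJColoring (pathGraph n) c) ∧
      ∀ k : ℕ, 2 < k → ¬ ∃ c : Fin n → Fin k, IsJColoring (pathGraph n) c := by
  constructor
  · refine ⟨fun v => ⟨v.val % 2, Nat.mod_lt _ two_pos⟩, ?_, ?_⟩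
    · intro u v huv h
      rw [pathGraph_adj] at huv
      have := congrArg Fin.val h
      simp at this
      omega
    · intro v i
      by_cases h : i.val = v.val % 2
      · exact ⟨v, Or.inl rfl, Fin.ext (by simp [h])⟩
      · by_cases hv : v.val + 1 < n
        · refine ⟨⟨v.val + 1, hv⟩, Or.inr ?_, Fin.ext ?_⟩
          · rw [pathGraph_adj]; left; rfl
          · have := i.isLt; simp; omega
        · have hv1 : 1 ≤ v.val := by have := v.isLt; omega
          refine ⟨⟨v.val - 1, by omega⟩, Or.inr ?_, Fin.ext ?_⟩
          · rw [pathGraph_adj]; right; simp; omega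
          · have := i.isLt; simp; omega
  · rintro k hk ⟨c, hp, hr⟩
    have h0 : (0 : ℕ) < n := by omega
    have h1 : (1 : ℕ) < n := by omega
    have key : ∀ i : Fin k, c ⟨0, h0⟩ = i ∨ c ⟨1, h1⟩ = i := by
      intro i
      obtain ⟨u, hu, hc⟩ := hr ⟨0, h0⟩ i
      rcases hu with rfl | hadj
      · exact Or.inl hc
      · rw [pathGraph_adj] at hadj
        have hv : (⟨0, h0⟩ : Fin n).val = 0 := rfl
        have : u = ⟨1, h1⟩ := Fin.ext (by rw [hv] at hadj; simp; omega)
        exact Or.inr (this ▸ hc)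
    have hi0 : (0:ℕ) < k := by omega
    have hi1 : (1:ℕ) < k := by omega
    have hi2 : (2:ℕ) < k := hk
    rcases key ⟨0, hi0⟩ with a0 | b0 <;> rcases key ⟨1, hi1⟩ with a1 | b1 <;>
      rcases key ⟨2, hi2⟩ with a2 | b2 <;>
      first
      | (exact absurd (a0.symm.trans a1) (by simp))
      | (exact absurd (a0.symm.trans a2) (by simp))
      | (exact absurd (a1.symm.trans a2) (by simp))
      | (exact absurd (b0.symm.trans b1) (by simp))
      | (exact absurd (b0.symm.trans b2) (by simp))
      | (exact absurd (b1.symm.trans b2) (by simp))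
end

section
/- For the path P_n on n ≥ 3 vertices, the modified J-colouring number equals 3: there is a proper 3-colouring such that every internal (non-pendant) vertex's closed neighbourhood contains all 3 colours, and no proper colouring with 4 or more colours has this property. -/
open SimpleGraph

/-- A modified J-colouring (J*-colouring): proper, and every internal vertex
(vertex with at least two distinct neighbours) is in a rainbow neighbourhood. -/
def IsJStarColoring {V : Type*} {k : ℕ} (G : SimpleGraph V) (c : V → Fin k) : Prop :=
  ProperColoring G c ∧
    ∀ v, (∃ u w, u ≠ w ∧ G.Adj v u ∧ G.Adj v w) → RainbowAt G c v

theorem Jstar_number_path (n : ℕ) (hn : 3 ≤ n) :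
    (∃ c : Fin n → Fin 3, IsJStarColoring (pathGraph n) c) ∧
      ∀ k : ℕ, 4 ≤ k → ¬ ∃ c : Fin n → Fin k, IsJStarColoring (pathGraph n) c := by
  constructor
  · refine ⟨fun v => ⟨v.val % 3, Nat.mod_lt _ (by norm_num)⟩, ?_, ?_⟩
    · intro u v h hc
      rw [pathGraph_adj] at h
      have hc' : u.val % 3 = v.val % 3 := congrArg Fin.val hc
      omega
    · rintro v ⟨u, w, huw, hu, hw⟩ i
      rw [pathGraph_adj] at hu hw
      have hne : u.val ≠ w.val := fun h => huw (Fin.ext h)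
      have hu' := u.isLt; have hw' := w.isLt; have hv' := v.isLt
      have hv1 : 1 ≤ v.val ∧ v.val + 1 < n := by omega
      have hi := i.isLt
      by_cases h1 : (v.val - 1) % 3 = i.val
      · exact ⟨⟨v.val - 1, by omega⟩, Or.inr (by
          rw [pathGraph_adj]; right; show (v.val - 1) + 1 = v.val; omega), Fin.ext h1⟩
      by_cases h2 : v.val % 3 = i.val
      · exact ⟨v, Or.inl rfl, Fin.ext h2⟩
      · refine ⟨⟨v.val + 1, by omega⟩, Or.inr (by
          rw [pathGraph_adj]; left; rfl), Fin.ext ?_⟩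
        show (v.val + 1) % 3 = i.val
        omega
  · rintro k hk ⟨c, hp, hr⟩
    have h2 : (2 : ℕ) < n := by omega
    have hrb := hr ⟨1, by omega⟩ ⟨⟨0, by omega⟩, ⟨2, by omega⟩, by
      refine ⟨by simp [Fin.ext_iff], ?_, ?_⟩ <;> (rw [pathGraph_adj]; simp)⟩
    set S : Finset (Fin n) := {⟨0, by omega⟩, ⟨1, by omega⟩, ⟨2, by omega⟩} with hS
    have hsub : (Finset.univ : Finset (Fin k)) ⊆ S.image c := by
      intro i _
      obtain ⟨u, hu, hcu⟩ := hrb i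
      refine Finset.mem_image.2 ⟨u, ?_, hcu⟩
      rcases hu with h | h
      · simp [hS, h]
      · rw [pathGraph_adj] at h
        simp only [hS, Finset.mem_insert, Finset.mem_singleton, Fin.ext_iff]
        simp only [Fin.val_mk] at h ⊢
        omega
    have := Finset.card_le_card hsub
    have hS3 : S.card ≤ 3 := by
      apply le_trans (Finset.card_insert_le _ _)
      simp [Finset.card_insert_le]
    have h1 : k ≤ (S.image c).card := by simpa using this
    have h2 := Finset.card_image_le (s := S) (f := c)
    omega
end

section
/- A cycle C_n (n ≥ 3) admits a J-colouring if and only if n ≡ 0 (mod 2) or n ≡ 0 (mod 3). -/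
open SimpleGraph

/-!
A J-colouring of `C_n` uses `k = 2` or `k = 3` colours: at least two because it is proper, at
most three because a closed neighbourhood has three vertices. With two colours properness forces
`c (v + 2) = c v`; with three, the rainbow neighbourhood of `v + 1` forces `c (v + 2)` to be the
colour missing from `{c v, c (v + 1)}`, hence `c (v + 3) = c v`. So `c` is `k`-periodic on
`ℤ/nℤ`; if the prime `k` did not divide `n` it would be invertible mod `n`, and `c` would be
`1`-periodic, which contradicts properness. Conversely, for `k ∈ {2, 3}` dividing `n`, colouring
`v` by `v mod k` is a J-colouring, since `N[v]` receives the colours `v - 1, v, v + 1` mod `k`.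
-/

open Function

section Coloring

variable {V : Type*} {G : SimpleGraph V} {k : ℕ} {c : V → Fin k}

lemma ProperColoring.two_le {u v : V} (hc : ProperColoring G c) (huv : G.Adj u v) : 2 ≤ k :=
  Fin.nontrivial_iff_two_le.mp ⟨⟨c u, c v, hc u v huv⟩⟩

lemma RainbowAt.le_card {v : V} {s : Finset V} (hc : RainbowAt G c v)
    (hs : ∀ u, u = v ∨ G.Adj v u → u ∈ s) : k ≤ s.card := by
  have hsurj : Set.SurjOn c s (Finset.univ : Finset (Fin k)) := fun i _ ↦
    let ⟨u, hu, hcu⟩ := hc i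
    ⟨u, hs u hu, hcu⟩
  simpa using Finset.card_le_card_of_surjOn c hsurj

end Coloring

section Cycle

open Fin.CommRing

lemma Fin.periodic_one_of_coprime {n d : ℕ} [NeZero n] {α : Type*} {f : Fin n → α}
    (hf : Periodic f d) (hd : d.Coprime n) : Periodic f 1 := by
  obtain rfl | hn := (NeZero.one_le : 1 ≤ n).eq_or_lt
  · exact fun x ↦ congrArg f (Subsingleton.elim _ _)
  obtain ⟨j, -, hj⟩ := Nat.exists_mul_mod_eq_one_of_coprime hd hn
  have hdj : ((d * j : ℕ) : Fin n) = 1 :=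
    Fin.ext (by rw [Fin.val_natCast, hj, Fin.val_one', Nat.mod_eq_of_lt hn])
  simpa [mul_comm, ← hdj] using hf.nat_mul j

variable {n k : ℕ}

lemma cycleGraph_adj_add_one (v : Fin (n + 2)) : (cycleGraph (n + 2)).Adj v (v + 1) := by
  simp [cycleGraph_adj]

lemma cycleGraph_adj_iff {u v : Fin (n + 2)} :
    (cycleGraph (n + 2)).Adj v u ↔ u = v - 1 ∨ u = v + 1 := by
  rw [← mem_neighborSet, cycleGraph_neighborSet]
  rfl

lemma rainbowAt_cycleGraph_iff {c : Fin (n + 2) → Fin k} {v : Fin (n + 2)} :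
    RainbowAt (cycleGraph (n + 2)) c v ↔ ∀ i, c v = i ∨ c (v - 1) = i ∨ c (v + 1) = i := by
  simp only [RainbowAt, cycleGraph_adj_iff, or_and_right, exists_or, exists_eq_left]

lemma IsJColoring.cycleGraph_le_three {c : Fin (n + 2) → Fin k}
    (hc : IsJColoring (cycleGraph (n + 2)) c) : k ≤ 3 :=
  calc k ≤ ({0 - 1, 0, 0 + 1} : Finset (Fin (n + 2))).card :=
        (hc.2 0).le_card fun u hu ↦ by rw [cycleGraph_adj_iff] at hu; grind
    _ ≤ 3 := Finset.card_le_three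

lemma ProperColoring.cycleGraph_apply_add_one_ne {c : Fin (n + 2) → Fin k}
    (hc : ProperColoring (cycleGraph (n + 2)) c) (v : Fin (n + 2)) : c (v + 1) ≠ c v :=
  (hc _ _ (cycleGraph_adj_add_one v)).symm

lemma ProperColoring.cycleGraph_prime_dvd_of_periodic {c : Fin (n + 2) → Fin k} {p : ℕ}
    (hc : ProperColoring (cycleGraph (n + 2)) c) (hp : p.Prime) (hper : Periodic c p) :
    p ∣ n + 2 := by
  by_contra h
  have hper_one := Fin.periodic_one_of_coprime hper ((hp.coprime_iff_not_dvd).2 h)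
  exact hc.cycleGraph_apply_add_one_ne 0 (hper_one 0)

lemma ProperColoring.cycleGraph_periodic_two {c : Fin (n + 2) → Fin 2}
    (hc : ProperColoring (cycleGraph (n + 2)) c) : Periodic c 2 := fun v ↦ by
  have h01 := hc.cycleGraph_apply_add_one_ne v
  have h12 := hc.cycleGraph_apply_add_one_ne (v + 1)
  rw [show v + 1 + 1 = v + 2 by ring] at h12
  omega

lemma IsJColoring.cycleGraph_apply_add_two_ne {c : Fin (n + 2) → Fin 3}
    (hc : IsJColoring (cycleGraph (n + 2)) c) (v : Fin (n + 2)) : c (v + 2) ≠ c v := by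
  have hthird : ∀ a b : Fin 3, ∃ i, i ≠ a ∧ i ≠ b := by decide
  obtain ⟨i, hiv, hiv1⟩ := hthird (c v) (c (v + 1))
  have hi := rainbowAt_cycleGraph_iff.1 (hc.2 (v + 1)) i
  rw [add_sub_cancel_right, show v + 1 + 1 = v + 2 by ring] at hi
  omega

lemma IsJColoring.cycleGraph_periodic_three {c : Fin (n + 2) → Fin 3}
    (hc : IsJColoring (cycleGraph (n + 2)) c) : Periodic c 3 := fun v ↦ by
  have h01 := hc.1.cycleGraph_apply_add_one_ne v
  have h12 := hc.1.cycleGraph_apply_add_one_ne (v + 1)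
  have h02 := hc.cycleGraph_apply_add_two_ne v
  have h23 := hc.1.cycleGraph_apply_add_one_ne (v + 2)
  have h13 := hc.cycleGraph_apply_add_two_ne (v + 1)
  rw [show v + 1 + 1 = v + 2 by ring] at h12
  rw [show v + 2 + 1 = v + 3 by ring] at h23
  rw [show v + 1 + 2 = v + 3 by ring] at h13
  omega

lemma Fin.natCast_val_add_one [NeZero k] (hk : k ∣ n + 2) (v : Fin (n + 2)) :
    (((v + 1).val : ℕ) : Fin k) = (v.val : Fin k) + 1 := by
  ext
  simp [Fin.val_natCast, Fin.val_add, Nat.mod_mod_of_dvd _ hk]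

lemma Fin.eq_or_sub_one_eq_or_add_one_eq [NeZero k] (hk : k ≤ 3) (a i : Fin k) :
    a = i ∨ a - 1 = i ∨ a + 1 = i := by
  interval_cases k <;> omega

lemma isJColoring_cycleGraph_natCast_val [NeZero k] (hk2 : 2 ≤ k) (hk3 : k ≤ 3)
    (hk : k ∣ n + 2) : IsJColoring (cycleGraph (n + 2)) (fun v ↦ (v.val : Fin k)) := by
  have hsucc := Fin.natCast_val_add_one hk
  have hne : ∀ v : Fin (n + 2), ((v + 1).val : Fin k) ≠ v.val := fun v ↦ by
    have := Fin.nontrivial_iff_two_le.2 hk2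
    simp [hsucc]
  refine ⟨fun u v huv ↦ ?_, fun v ↦ rainbowAt_cycleGraph_iff.2 fun i ↦ ?_⟩
  · rcases cycleGraph_adj_iff.1 huv with rfl | rfl
    · simpa using hne (u - 1)
    · exact (hne u).symm
  · have hpred : ((v - 1).val : Fin k) = v.val - 1 :=
      eq_sub_of_add_eq (by rw [← hsucc, sub_add_cancel])
    rw [hpred, hsucc]
    exact Fin.eq_or_sub_one_eq_or_add_one_eq hk3 _ _

end Cycle

theorem cycle_JColorable_iff (n : ℕ) (hn : 3 ≤ n) :
    (∃ k : ℕ, ∃ c : Fin n → Fin k, IsJColoring (cycleGraph n) c) ↔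
      n % 2 = 0 ∨ n % 3 = 0 := by
  obtain ⟨n, rfl⟩ : ∃ m, n = m + 2 := ⟨n - 2, by omega⟩
  simp only [← Nat.dvd_iff_mod_eq_zero]
  constructor
  · rintro ⟨k, c, hc⟩
    have hk2 := hc.1.two_le (cycleGraph_adj_add_one 0)
    have hk3 := hc.cycleGraph_le_three
    interval_cases k
    · exact .inl <| hc.1.cycleGraph_prime_dvd_of_periodic Nat.prime_two <| by
        simpa using hc.1.cycleGraph_periodic_two
    · exact .inr <| hc.1.cycleGraph_prime_dvd_of_periodic Nat.prime_three <| by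
        simpa using hc.cycleGraph_periodic_three
  · rintro (h | h)
    · exact ⟨2, _, isJColoring_cycleGraph_natCast_val le_rfl (by norm_num) h⟩
    · exact ⟨3, _, isJColoring_cycleGraph_natCast_val (by norm_num) le_rfl h⟩
end

section
/- If n ≡ 0 (mod 3), then the cycle C_n admits a J-colouring with exactly 3 colours, and its J-colouring number is 3. -/
open SimpleGraph

/-! When `3 ∣ n`, the colouring `v ↦ v mod 3` of `C_n` steps by one along the cycle, so each
closed neighbourhood `{v - 1, v, v + 1}` sees the three colours `c v - 1, c v, c v + 1`.
No J-colouring can use more colours than a closed neighbourhood has vertices, which is `3` on a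
cycle. -/

theorem RainbowAt.card_le_degree_add_one {V : Type*} [DecidableEq V] {k : ℕ} {G : SimpleGraph V}
    {c : V → Fin k} {v : V} [Fintype (G.neighborSet v)] (h : RainbowAt G c v) :
    k ≤ G.degree v + 1 := by
  have hsurj :
      Set.SurjOn c ↑(insert v (G.neighborFinset v)) ↑(Finset.univ : Finset (Fin k)) := by
    intro i _
    obtain ⟨u, hu, rfl⟩ := h i
    refine ⟨u, ?_, rfl⟩
    simpa [eq_comm] using hu
  calc k = (Finset.univ : Finset (Fin k)).card := (Finset.card_fin k).symm
    _ ≤ (insert v (G.neighborFinset v)).card := Finset.card_le_card_of_surjOn c hsurj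
    _ ≤ G.degree v + 1 := Finset.card_insert_le _ _

theorem Fin.ofNat_val_add_of_dvd {n d : ℕ} [NeZero d] (hd : d ∣ n) (v w : Fin n) :
    Fin.ofNat d (v + w : Fin n) = Fin.ofNat d v + Fin.ofNat d w := by
  ext
  simp only [Fin.val_add, Fin.val_ofNat, Nat.mod_mod_of_dvd _ hd, Nat.add_mod_mod, Nat.mod_add_mod]

theorem isJColoring_cycleGraph_of_map_add_one {n : ℕ} {c : Fin (n + 2) → Fin 3}
    (hc : ∀ v, c (v + 1) = c v + 1) : IsJColoring (cycleGraph (n + 2)) c := by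
  have hc' : ∀ v, c (v - 1) = c v - 1 := fun v => by
    rw [eq_sub_iff_add_eq, ← hc, sub_add_cancel]
  have hne : ∀ x : Fin 3, x + 1 ≠ x := by decide
  constructor
  · intro u v huv
    rcases cycleGraph_adj.mp huv with h | h
    · rw [sub_eq_iff_eq_add'.mp h, hc]
      exact hne _
    · rw [sub_eq_iff_eq_add'.mp h, hc]
      exact (hne _).symm
  · intro v i
    have hnbr : ∀ u ∈ ({v - 1, v + 1} : Set (Fin (n + 2))), (cycleGraph (n + 2)).Adj v u := by
      intro u hu
      rwa [← mem_neighborSet, cycleGraph_neighborSet]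
    obtain h | h | h : i = c v ∨ i = c v + 1 ∨ i = c v - 1 := by
      generalize c v = x; revert i x; decide
    · exact ⟨v, Or.inl rfl, h.symm⟩
    · exact ⟨v + 1, Or.inr (hnbr _ (by simp)), by rw [hc, h]⟩
    · exact ⟨v - 1, Or.inr (hnbr _ (by simp)), by rw [hc', h]⟩

theorem J_number_cycle_three (n : ℕ) (hn : 3 ≤ n) (h3 : n % 3 = 0) :
    (∃ c : Fin n → Fin 3, IsJColoring (cycleGraph n) c) ∧
      ∀ k : ℕ, 3 < k → ¬ ∃ c : Fin n → Fin k, IsJColoring (cycleGraph n) c := by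
  obtain ⟨m, rfl⟩ : ∃ m, n = m + 3 := ⟨n - 3, by omega⟩
  have hstep : ∀ v : Fin (m + 3), Fin.ofNat 3 ↑(v + 1) = Fin.ofNat 3 v + 1 := fun v => by
    rw [Fin.ofNat_val_add_of_dvd (Nat.dvd_of_mod_eq_zero h3), Fin.val_one]
    rfl
  refine ⟨⟨fun v => Fin.ofNat 3 v, isJColoring_cycleGraph_of_map_add_one (n := m + 1) hstep⟩,
    ?_⟩
  rintro k hk ⟨c, -, hrainbow⟩
  have hdeg := (hrainbow 0).card_le_degree_add_one
  rw [cycleGraph_degree_three_le] at hdeg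
  omega
end

section
/- For the complete l-partite graph K_{n_1,n_2,...,n_l}, the J-colouring number equals l. -/
open SimpleGraph

theorem J_number_completeMultipartite (l : ℕ) (hl : 1 ≤ l)
    (n : Fin l → ℕ) (hn : ∀ i, 1 ≤ n i) :
    (∃ c : (Σ i : Fin l, Fin (n i)) → Fin l,
        IsJColoring (completeMultipartiteGraph (fun i : Fin l => Fin (n i))) c) ∧
      ∀ k : ℕ, l < k → ¬ ∃ c : (Σ i : Fin l, Fin (n i)) → Fin k,
        IsJColoring (completeMultipartiteGraph (fun i : Fin l => Fin (n i))) c := by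
  constructor
  · refine ⟨fun x => x.1, ?_, ?_⟩
    · intro u v h hc
      exact h hc
    · intro v j
      by_cases hj : j = v.1
      · exact ⟨v, Or.inl rfl, hj.symm⟩
      · exact ⟨⟨j, ⟨0, hn j⟩⟩, Or.inr (fun h => hj h.symm), rfl⟩
  · rintro k hk ⟨c, hp, hr⟩
    -- c is constant on each part
    have hconst : ∀ (i : Fin l) (a b : Fin (n i)), c ⟨i, a⟩ = c ⟨i, b⟩ := by
      intro i a b
      by_contra hne
      obtain ⟨w, hw, hcw⟩ := hr ⟨i, a⟩ (c ⟨i, b⟩)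
      rcases hw with rfl | hadj
      · exact hne hcw
      · have : (⟨i, b⟩ : Σ i : Fin l, Fin (n i)).1 ≠ w.1 := hadj
        exact hp ⟨i, b⟩ w this hcw.symm
    set f : Fin l → Fin k := fun i => c ⟨i, ⟨0, hn i⟩⟩ with hf
    have hns : ¬ Function.Surjective f := by
      intro hs
      have := Fintype.card_le_of_surjective f hs
      simp at this
      omega
    simp only [Function.Surjective, not_forall, not_exists] at hns
    obtain ⟨j, hj⟩ := hns
    obtain ⟨w, _, hcw⟩ := hr ⟨⟨0, hl⟩, ⟨0, hn _⟩⟩ j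
    exact hj w.1 (by rw [hf]; obtain ⟨i, a⟩ := w; exact (hconst i _ a).trans hcw)
end

section
/- For the wheel graph W_{n+1} = K_1 + C_n: if the cycle C_n admits a J-colouring, then W_{n+1} admits a J-colouring and 𝒥(W_{n+1}) = 1 + 𝒥(C_n). Consequently 𝒥(W_{n+1}) = 4 if n ≡ 0 (mod 3), and 𝒥(W_{n+1}) = 3 if n is even and n ≢ 0 (mod 3). -/
open SimpleGraph

/-- The wheel graph `W_{n+1} = K_1 + C_n`: a central vertex `none` joined to
every vertex of the cycle `C_n`. -/
def wheelGraph (n : ℕ) : SimpleGraph (Option (Fin n)) where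
  Adj u v :=
    match u, v with
    | none, none => False
    | none, some _ => True
    | some _, none => True
    | some i, some j => (cycleGraph n).Adj i j
  symm := by
    constructor
    intro u v h
    match u, v with
    | none, some _ => trivial
    | some _, none => trivial
    | some i, some j => exact (cycleGraph n).adj_symm h
  loopless := by
    constructor
    intro u h
    match u with
    | none => exact h
    | some i => exact (cycleGraph n).irrefl h

/-- The J-colouring number: the largest number of colours in a J-colouring. -/
noncomputable def JNumber {V : Type*} (G : SimpleGraph V) : ℕ :=
  sSup {k : ℕ | ∃ c : V → Fin k, IsJColoring G c}

/-!
Giving the centre of `K₁ + G` a fresh colour turns a J-colouring of `G` with `k` colours into one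
of `K₁ + G` with `k + 1` colours. Conversely the centre is adjacent to everything, so its colour
is used nowhere else; after permuting colours it is the last one, and dropping it leaves a
J-colouring of `G`. Hence `𝒥(K₁ + G) = 𝒥(G) + 1` once `G` has a J-colouring and `𝒥(G)` is finite.

On `C_n` every closed neighbourhood has three vertices, so `𝒥(C_n) ≤ 3`, and a proper colouring
needs two colours. With three colours the three vertices of each closed neighbourhood get distinct
colours, which makes the colouring 3-periodic along the cycle; since it is also `n`-periodic and adjacent vertices differ, `3 ∣ n`.
Conversely for `3 ∣ n` the residues mod 3 form a J-colouring.
-/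

theorem fin_three_eq_of_ne_pair {a b x y : Fin 3} (hab : a ≠ b) (hxa : x ≠ a) (hxb : x ≠ b)
    (hya : y ≠ a) (hyb : y ≠ b) : x = y := by
  omega

namespace SimpleGraph

section General

variable {V : Type*} {G : SimpleGraph V} {k : ℕ}

theorem ProperColoring.two_le_of_adj {c : V → Fin k} (hc : ProperColoring G c) {u v : V}
    (huv : G.Adj u v) : 2 ≤ k := by
  by_contra! hk
  interval_cases k
  · exact (c u).elim0
  · exact hc u v huv (Subsingleton.elim _ _)

theorem RainbowAt.le_degree_add_one {c : V → Fin k} {v : V} (hv : RainbowAt G c v)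
    [Fintype (G.neighborSet v)] : k ≤ G.degree v + 1 := by
  have hcover : Finset.univ ⊆ insert (c v) ((G.neighborFinset v).image c) := by
    intro i _
    obtain ⟨u, rfl | hu, rfl⟩ := hv i
    · exact Finset.mem_insert_self _ _
    · exact Finset.mem_insert_of_mem (Finset.mem_image_of_mem c ((G.mem_neighborFinset v u).2 hu))
  calc k = (Finset.univ : Finset (Fin k)).card := (Finset.card_fin k).symm
    _ ≤ ((G.neighborFinset v).image c).card + 1 :=
      (Finset.card_le_card hcover).trans (Finset.card_insert_le _ _)
    _ ≤ G.degree v + 1 := by grw [Finset.card_image_le, card_neighborFinset_eq_degree]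

theorem IsJColoring.comp_equiv {k' : ℕ} {c : V → Fin k} (hc : IsJColoring G c)
    (e : Fin k ≃ Fin k') : IsJColoring G (e ∘ c) := by
  refine ⟨fun u v huv h => hc.1 u v huv (e.injective h), fun v i => ?_⟩
  obtain ⟨u, hu, hcu⟩ := hc.2 v (e.symm i)
  exact ⟨u, hu, by simp [hcu]⟩

end General

section Cone

variable {V : Type*} {G : SimpleGraph V} {k : ℕ}

/-- The join `K₁ + G`, with apex `none`. -/
def cone (G : SimpleGraph V) : SimpleGraph (Option V) where
  Adj
    | none, none => False
    | none, some _ => True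
    | some _, none => True
    | some u, some v => G.Adj u v
  symm := ⟨by
    rintro (_ | u) (_ | v) h
    exacts [h, trivial, trivial, G.adj_symm h]⟩
  loopless := ⟨by
    rintro (_ | u) h
    exacts [h, G.irrefl h]⟩

@[simp] theorem cone_adj_none_none : ¬G.cone.Adj none none := id

@[simp] theorem cone_adj_none_some (v : V) : G.cone.Adj none (some v) := trivial

@[simp] theorem cone_adj_some_none (v : V) : G.cone.Adj (some v) none := trivial

@[simp] theorem cone_adj_some_some {u v : V} : G.cone.Adj (some u) (some v) ↔ G.Adj u v :=
  Iff.rfl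

theorem IsJColoring.cone [Nonempty V] {c : V → Fin k} (hc : IsJColoring G c) :
    IsJColoring G.cone (fun o => o.elim (Fin.last k) (fun v => (c v).castSucc)) := by
  constructor
  · rintro (_ | u) (_ | v) huv
    · exact absurd huv cone_adj_none_none
    · exact (Fin.castSucc_ne_last _).symm
    · exact Fin.castSucc_ne_last _
    · exact fun h => hc.1 u v huv (Fin.castSucc_injective k h)
  · intro o i
    induction i using Fin.lastCases with
    | last => exact ⟨none, by cases o <;> simp⟩
    | cast j =>
      cases o with
      | none =>
        obtain ⟨u, -, hu⟩ := hc.2 (Classical.arbitrary V) j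
        exact ⟨some u, by simp [hu]⟩
      | some v =>
        obtain ⟨u, hu, hcu⟩ := hc.2 v j
        exact ⟨some u, by simpa [hcu] using hu⟩

theorem IsJColoring.exists_of_cone {d : Option V → Fin (k + 1)} (hd : IsJColoring G.cone d) :
    ∃ c : V → Fin k, IsJColoring G c := by
  wlog hlast : d none = Fin.last k generalizing d
  · exact this (hd.comp_equiv (Equiv.swap (d none) (Fin.last k))) (by simp)
  have hne : ∀ v, d (some v) ≠ Fin.last k := fun v => hlast ▸ hd.1 _ _ (cone_adj_some_none v)
  refine ⟨fun v => (d (some v)).castPred (hne v), fun u v huv h => ?_, fun v j => ?_⟩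
  · exact hd.1 _ _ (cone_adj_some_some.2 huv) (Fin.castPred_inj.1 h)
  · obtain ⟨_ | u, hu, hdu⟩ := hd.2 (some v) j.castSucc
    · exact absurd (hlast ▸ hdu) (Fin.castSucc_ne_last j).symm
    · exact ⟨u, by simpa using hu, by simp [hdu]⟩

theorem jNumber_cone [Nonempty V]
    (hne : {k : ℕ | ∃ c : V → Fin k, IsJColoring G c}.Nonempty)
    (hbdd : BddAbove {k : ℕ | ∃ c : V → Fin k, IsJColoring G c}) :
    JNumber G.cone = JNumber G + 1 := by
  obtain ⟨c, hc⟩ := Nat.sSup_mem hne hbdd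
  refine IsGreatest.csSup_eq ⟨⟨_, hc.cone⟩, ?_⟩
  rintro (_ | k) ⟨d, hd⟩
  · exact Nat.zero_le _
  · exact Nat.succ_le_succ (le_csSup hbdd hd.exists_of_cone)

end Cone

section Cycle

open Fin.CommRing

variable {n : ℕ}

theorem cycleGraph_adj_add_one (v : Fin (n + 2)) : (cycleGraph (n + 2)).Adj v (v + 1) := by
  rw [← mem_neighborSet, cycleGraph_neighborSet]
  simp

theorem cycleGraph_adj_sub_one (v : Fin (n + 2)) : (cycleGraph (n + 2)).Adj v (v - 1) := by
  rw [← mem_neighborSet, cycleGraph_neighborSet]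
  simp

theorem eq_sub_one_or_eq_add_one_of_cycleGraph_adj {v w : Fin (n + 2)}
    (h : (cycleGraph (n + 2)).Adj v w) : w = v - 1 ∨ w = v + 1 := by
  rwa [← mem_neighborSet, cycleGraph_neighborSet] at h

theorem IsJColoring.le_three_of_cycleGraph {k : ℕ} {c : Fin (n + 2) → Fin k}
    (hc : IsJColoring (cycleGraph (n + 2)) c) : k ≤ 3 :=
  (hc.2 0).le_degree_add_one.trans <| by
    rw [cycleGraph_degree_two_le]
    exact Nat.succ_le_succ Finset.card_le_two

theorem bddAbove_setOf_isJColoring_cycleGraph :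
    BddAbove {k : ℕ | ∃ c : Fin (n + 2) → Fin k, IsJColoring (cycleGraph (n + 2)) c} :=
  ⟨3, fun _ ⟨_, hc⟩ => hc.le_three_of_cycleGraph⟩

theorem exists_isJColoring_cycleGraph_three_of_dvd (h : 3 ∣ n + 2) :
    ∃ c : Fin (n + 2) → Fin 3, IsJColoring (cycleGraph (n + 2)) c := by
  let φ : ZMod (n + 2) →+* ZMod 3 := ZMod.castHom h (ZMod 3)
  have hsub : ∀ u v : Fin (n + 2), φ (u - v) = φ u - φ v := map_sub φ
  have hadd : ∀ u v : Fin (n + 2), φ (u + v) = φ u + φ v := map_add φ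
  have hone : φ (1 : Fin (n + 2)) = 1 := map_one φ
  refine ⟨φ, fun u v huv hφuv => ?_, fun v i => ?_⟩
  · rcases cycleGraph_adj.1 huv with e | e
    · have := hsub u v
      rw [e, hone, hφuv, sub_self] at this
      exact one_ne_zero this
    · have := hsub v u
      rw [e, hone, hφuv, sub_self] at this
      exact one_ne_zero this
  · have hi : ∀ a i : ZMod 3, i = a ∨ i = a - 1 ∨ i = a + 1 := by decide
    rcases hi (φ v) i with rfl | rfl | rfl
    · exact ⟨v, Or.inl rfl, rfl⟩
    · exact ⟨v - 1, Or.inr (cycleGraph_adj_sub_one v), by rw [hsub, hone]⟩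
    · exact ⟨v + 1, Or.inr (cycleGraph_adj_add_one v), by rw [hadd, hone]⟩

theorem IsJColoring.cycleGraph_sub_one_ne_add_one {c : Fin (n + 2) → Fin 3}
    (hc : IsJColoring (cycleGraph (n + 2)) c) (v : Fin (n + 2)) : c (v - 1) ≠ c (v + 1) := by
  intro heq
  have hcover : (Finset.univ : Finset (Fin 3)) ⊆ {c v, c (v + 1)} := by
    intro i _
    obtain ⟨u, rfl | hu, rfl⟩ := hc.2 v i
    · simp
    · rcases eq_sub_one_or_eq_add_one_of_cycleGraph_adj hu with rfl | rfl <;> simp [heq]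
  have := (Finset.card_le_card hcover).trans Finset.card_le_two
  simp at this

theorem IsJColoring.periodic_cycleGraph {c : Fin (n + 2) → Fin 3}
    (hc : IsJColoring (cycleGraph (n + 2)) c) : Function.Periodic c 3 := by
  intro v
  obtain ⟨w, rfl⟩ : ∃ w, v = w - 1 := ⟨v + 1, by ring⟩
  rw [show w - 1 + 3 = w + 1 + 1 by ring]
  -- `c (w + 1 + 1)` and `c (w - 1)` both avoid the two distinct colours `c w` and `c (w + 1)`.
  have hadj : ∀ u, c (u + 1) ≠ c u := fun u => (hc.1 _ _ (cycleGraph_adj_add_one u)).symm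
  refine fin_three_eq_of_ne_pair (hadj w).symm ?_ (hadj (w + 1))
    (hc.1 _ _ (cycleGraph_adj_sub_one w)).symm (hc.cycleGraph_sub_one_ne_add_one w)
  simpa using (hc.cycleGraph_sub_one_ne_add_one (w + 1)).symm

theorem IsJColoring.three_dvd_of_cycleGraph {c : Fin (n + 2) → Fin 3}
    (hc : IsJColoring (cycleGraph (n + 2)) c) : 3 ∣ n + 2 := by
  by_contra h3
  -- `3` is invertible modulo `n + 2`, so `3`-periodicity would give `c 1 = c 0`.
  obtain ⟨t, -, ht⟩ := Nat.exists_mul_mod_eq_one_of_coprime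
    (Nat.prime_three.coprime_iff_not_dvd.2 h3) (by omega : 1 < n + 2)
  have h1 : (Nat.cast (3 * t) : Fin (n + 2)) = 1 := by
    rw [Fin.ext_iff, Fin.val_natCast, ht, Fin.val_one]
  push_cast at h1
  have := hc.periodic_cycleGraph.nat_mul_eq t
  rw [mul_comm] at h1
  rw [h1] at this
  exact hc.1 _ _ (cycleGraph_adj_add_one 0) (by simpa using this.symm)

theorem jNumber_cycleGraph_of_three_dvd (h : 3 ∣ n + 2) : JNumber (cycleGraph (n + 2)) = 3 :=
  IsGreatest.csSup_eq ⟨exists_isJColoring_cycleGraph_three_of_dvd h,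
    fun _ ⟨_, hc⟩ => hc.le_three_of_cycleGraph⟩

theorem jNumber_cycleGraph_of_not_three_dvd {k : ℕ} {c : Fin (n + 2) → Fin k}
    (hc : IsJColoring (cycleGraph (n + 2)) c) (h : ¬3 ∣ n + 2) :
    JNumber (cycleGraph (n + 2)) = 2 := by
  have hne3 : ∀ {k} {c : Fin (n + 2) → Fin k}, IsJColoring (cycleGraph (n + 2)) c → k ≠ 3 := by
    rintro _ c hc rfl
    exact h hc.three_dvd_of_cycleGraph
  obtain rfl : k = 2 := by
    have := hc.1.two_le_of_adj (cycleGraph_adj_add_one 0)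
    have := hc.le_three_of_cycleGraph
    have := hne3 hc
    omega
  refine IsGreatest.csSup_eq ⟨⟨c, hc⟩, fun k ⟨c', hc'⟩ => ?_⟩
  have := hc'.le_three_of_cycleGraph
  have := hne3 hc'
  omega

end Cycle

theorem wheelGraph_eq_cone (n : ℕ) : wheelGraph n = (cycleGraph n).cone := by
  ext (_ | u) (_ | v) <;> rfl

end SimpleGraph

open SimpleGraph in
theorem J_number_wheel (n : ℕ) (hn : 3 ≤ n)
    (h : ∃ k : ℕ, ∃ c : Fin n → Fin k, IsJColoring (cycleGraph n) c) :
    (∃ k : ℕ, ∃ c : Option (Fin n) → Fin k, IsJColoring (wheelGraph n) c) ∧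
      JNumber (wheelGraph n) = 1 + JNumber (cycleGraph n) ∧
      (n % 3 = 0 → JNumber (wheelGraph n) = 4) ∧
      (n % 2 = 0 → n % 3 ≠ 0 → JNumber (wheelGraph n) = 3) := by
  obtain ⟨m, rfl⟩ : ∃ m, n = m + 2 := ⟨n - 2, by omega⟩
  obtain ⟨k, c, hc⟩ := h
  have hW : JNumber (wheelGraph (m + 2)) = JNumber (cycleGraph (m + 2)) + 1 := by
    rw [wheelGraph_eq_cone]
    exact jNumber_cone ⟨k, c, hc⟩ bddAbove_setOf_isJColoring_cycleGraph
  refine ⟨⟨k + 1, wheelGraph_eq_cone _ ▸ ⟨_, hc.cone⟩⟩, by rw [hW, add_comm], fun h3 => ?_,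
    fun _ h3 => ?_⟩
  · rw [hW, jNumber_cycleGraph_of_three_dvd (by omega)]
  · rw [hW, jNumber_cycleGraph_of_not_three_dvd hc (by omega)]
end

section
/- In any proper 3-colouring of an odd cycle C_n with n ≡ ±1 (mod 6), at least one vertex has a closed neighbourhood missing one of the three colours. -/
/-!
If the closed neighbourhood `{v - 1, v, v + 1}` of every vertex of `C_n` shows all three colours,
then `c (v - 1)` and `c (v + 2)` are both the colour missing from `{c v, c (v + 1)}`, so the
colouring is invariant under rotation by `3`. When `3 ∤ n` the rotation by `3` generates all
rotations, so the colouring is constant, and no neighbourhood is rainbow.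
-/

open SimpleGraph

open Function Fin.CommRing

theorem Function.Periodic.apply_eq_apply_zero_of_coprime {α : Type*} {n a : ℕ} [NeZero n]
    {f : Fin n → α} (hf : Periodic f (a : Fin n)) (ha : a.Coprime n) (x : Fin n) :
    f x = f 0 := by
  obtain ⟨m, -, hm⟩ := Nat.exists_mul_mod_eq_of_coprime x.val ha (NeZero.ne n)
  have hx : m • (a : Fin n) = x := by
    rw [nsmul_eq_mul, ← Nat.cast_mul, Nat.mul_comm, Fin.ext_iff, Fin.val_natCast, hm,
      Nat.mod_eq_of_lt x.isLt]
  rw [← hx]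
  exact hf.nsmul_eq m

theorem eq_of_eq_or_cycleGraph_adj {n : ℕ} [NeZero n] {u v : Fin n}
    (h : u = v ∨ (cycleGraph n).Adj v u) : u = v - 1 ∨ u = v ∨ u = v + 1 := by
  rcases h with rfl | hadj
  · exact Or.inr (Or.inl rfl)
  obtain _ | _ | n := n
  · exact v.elim0
  · exact (cycleGraph_one_adj hadj).elim
  · rw [← mem_neighborSet, cycleGraph_neighborSet] at hadj
    rcases hadj with h | h
    · exact Or.inl h
    · exact Or.inr (Or.inr h)

theorem RainbowAt.eq_or_eq_or_eq_cycleGraph {n k : ℕ} [NeZero n] {c : Fin n → Fin k}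
    {v : Fin n} (h : RainbowAt (cycleGraph n) c v) (i : Fin k) :
    i = c (v - 1) ∨ i = c v ∨ i = c (v + 1) := by
  obtain ⟨u, hu, rfl⟩ := h i
  rcases eq_of_eq_or_cycleGraph_adj hu with rfl | rfl | rfl <;> simp

theorem Fin.eq_of_forall_eq_or_eq_or_eq_three : ∀ x a b y : Fin 3,
    (∀ i, i = x ∨ i = a ∨ i = b) → (∀ i, i = a ∨ i = b ∨ i = y) → x = y := by
  decide

theorem periodic_three_of_forall_rainbowAt_cycleGraph {n : ℕ} [NeZero n] {c : Fin n → Fin 3}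
    (h : ∀ v, RainbowAt (cycleGraph n) c v) : Periodic c (3 : ℕ) := by
  intro w
  have hw := (h (w + 1)).eq_or_eq_or_eq_cycleGraph
  have hw' := (h (w + 1 + 1)).eq_or_eq_or_eq_cycleGraph
  rw [add_sub_cancel_right] at hw hw'
  have h3 : w + 1 + 1 + 1 = w + (3 : ℕ) := by
    push_cast
    ring
  rw [h3] at hw'
  exact (Fin.eq_of_forall_eq_or_eq_or_eq_three _ _ _ _ hw hw').symm

theorem three_dvd_of_forall_rainbowAt_cycleGraph {n : ℕ} {c : Fin n → Fin 3}
    (h : ∀ v, RainbowAt (cycleGraph n) c v) : 3 ∣ n := by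
  rcases Nat.eq_zero_or_pos n with rfl | hn
  · exact dvd_zero 3
  have : NeZero n := ⟨hn.ne'⟩
  by_contra h3
  have hconst := (periodic_three_of_forall_rainbowAt_cycleGraph h).apply_eq_apply_zero_of_coprime
    (Nat.prime_three.coprime_iff_not_dvd.2 h3)
  obtain ⟨u, -, hu⟩ := h 0 (c 0 + 1)
  rw [hconst u] at hu
  exact (by decide : ∀ x : Fin 3, x ≠ x + 1) _ hu

theorem odd_cycle_no_rainbow_3coloring_general (n : ℕ)
    (h : n % 6 = 1 ∨ n % 6 = 5) :
    ∀ c : Fin n → Fin 3, ProperColoring (cycleGraph n) c →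
      ∃ v : Fin n, ∃ i : Fin 3,
        ∀ u, (u = v ∨ (cycleGraph n).Adj v u) → c u ≠ i := by
  intro c _
  by_contra hcon
  push Not at hcon
  have := three_dvd_of_forall_rainbowAt_cycleGraph (c := c) hcon
  omega

theorem odd_cycle_no_rainbow_3coloring (n : ℕ) (hn : 3 ≤ n)
    (h : n % 6 = 1 ∨ n % 6 = 5) :
    ∀ c : Fin n → Fin 3, ProperColoring (cycleGraph n) c →
      ∃ v : Fin n, ∃ i : Fin 3,
        ∀ u, (u = v ∨ (cycleGraph n).Adj v u) → c u ≠ i :=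
  odd_cycle_no_rainbow_3coloring_general n h
end
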